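/- Suppose σ and ω are rectangle reverse doubling measures on ℝ^m × ℝ^n (i.e. |sI×tJ|_μ ≤ C s^{mε} t^{nε} |I×J|_μ for 0<s,t<1 for some ε>0), and 0<α<m, 0<β<n, 1<p,q<∞. Then the no-tail, one-tail and two-tail product Muckenhoupt characteristics are all equivalent: Â^{(α,β),(m,n)}_{p,q}(σ,ω) ≈ Ā^{(α,β),(m,n)}_{p,q}(σ,ω) ≈ A^{(α,β),(m,n)}_{p,q}(σ,ω). -/

import Mathlib

/-!
On `I × J` the two-parameter tail is bounded below by a constant depending only on `m, n, α, β`,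
so trading an indicator for a tail costs at most that factor: `A ≲ Ā ≲ Â`.

For `Â ≲ A`, the tail is at most `2^(k(α-m) + j(β-n))` on the dyadic annulus of scale
`(2^k, 2^j)`, which lies in `2^(k+2)I × 2^(j+2)J`. As `t ↦ t^ρ` is subadditive for `ρ ≤ 1`,
each tail factor of `Â` is dominated by the dyadic sum of
`2^(k(α-m) + j(β-n)) μ(2^(k+2)I × 2^(j+2)J)^ρ`.
In the product of the two sums, reverse doubling moves both rectangles up to their common
enlargement, of index `(k ⊔ k', j ⊔ j')`, where `A` controls the product of the two measures.
The decay of the tails (`α < m`, `β < n`) together with the gain from reverse doubling leaves a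
factor `2^(-δ(k+j+k'+j')/2)` with `δ > 0`, and the geometric series converges.
-/

open MeasureTheory ENNReal Set

noncomputable section

abbrev E (m : ℕ) := EuclideanSpace ℝ (Fin m)

/-- The axis-parallel cube with center `c` and side length `s`. -/
def cube (m : ℕ) (c : E m) (s : ℝ) : Set (E m) :=
  {x | ∀ i, |x i - c i| ≤ s / 2}

/-- The one-parameter tail `(1 + |x−c|/s)^{α−m}`. -/
noncomputable def tail (m : ℕ) (α : ℝ) (c : E m) (s : ℝ) (x : E m) : ℝ≥0∞ :=
  ENNReal.ofReal ((1 + ‖x - c‖ / s) ^ (α - (m : ℝ)))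

/-- `μ` satisfies the rectangle reverse doubling condition with constant `C₀` and exponent
`ε`: `|s'I × t'J|_μ ≤ C₀ (s'/s)^{mε} (t'/t)^{nε} |I×J|_μ` for concentric shrunken rectangles. -/
def RectRevDoub (m n : ℕ) (ε C₀ : ℝ) (μ : Measure (E m × E n)) : Prop :=
  ∀ (c : E m) (d : E n) (s t s' t' : ℝ), 0 < s' → s' ≤ s → 0 < t' → t' ≤ t →
    μ (cube m c s' ×ˢ cube n d t')
      ≤ ENNReal.ofReal (C₀ * (s' / s) ^ ((m : ℝ) * ε) * (t' / t) ^ ((n : ℝ) * ε)) *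
          μ (cube m c s ×ˢ cube n d t)

/-- The no-tail rectangle characteristic `A^{(α,β),(m,n)}_{p,q}(σ,ω)`. -/
noncomputable def Ant (m n : ℕ) (α β p q : ℝ) (σ ω : Measure (E m × E n)) : ℝ≥0∞ :=
  ⨆ (c : E m) (d : E n) (s : ℝ) (t : ℝ) (_ : 0 < s) (_ : 0 < t),
    ENNReal.ofReal (s ^ (α - (m : ℝ)) * t ^ (β - (n : ℝ))) *
      (ω (cube m c s ×ˢ cube n d t)) ^ (1 / q) * (σ (cube m c s ×ˢ cube n d t)) ^ (1 - 1 / p)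

/-- The one-tailed rectangle characteristic `Ā^{(α,β),(m,n)}_{p,q}(σ,ω)`. -/
noncomputable def Aot (m n : ℕ) (α β p q : ℝ) (σ ω : Measure (E m × E n)) : ℝ≥0∞ :=
  (⨆ (c : E m) (d : E n) (s : ℝ) (t : ℝ) (_ : 0 < s) (_ : 0 < t),
      ENNReal.ofReal (s ^ (α - (m : ℝ)) * t ^ (β - (n : ℝ))) *
        (∫⁻ z, (tail m α c s z.1 * tail n β d t z.2) ^ q ∂ω) ^ (1 / q) *
        (σ (cube m c s ×ˢ cube n d t)) ^ (1 - 1 / p)) +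
    ⨆ (c : E m) (d : E n) (s : ℝ) (t : ℝ) (_ : 0 < s) (_ : 0 < t),
      ENNReal.ofReal (s ^ (α - (m : ℝ)) * t ^ (β - (n : ℝ))) *
        (ω (cube m c s ×ˢ cube n d t)) ^ (1 / q) *
        (∫⁻ z, (tail m α c s z.1 * tail n β d t z.2) ^ (p / (p - 1)) ∂σ) ^ (1 - 1 / p)

/-- The two-tailed rectangle characteristic `Â^{(α,β),(m,n)}_{p,q}(σ,ω)`. -/
noncomputable def Aht (m n : ℕ) (α β p q : ℝ) (σ ω : Measure (E m × E n)) : ℝ≥0∞ :=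
  ⨆ (c : E m) (d : E n) (s : ℝ) (t : ℝ) (_ : 0 < s) (_ : 0 < t),
    ENNReal.ofReal (s ^ (α - (m : ℝ)) * t ^ (β - (n : ℝ))) *
      (∫⁻ z, (tail m α c s z.1 * tail n β d t z.2) ^ q ∂ω) ^ (1 / q) *
      (∫⁻ z, (tail m α c s z.1 * tail n β d t z.2) ^ (p / (p - 1)) ∂σ) ^ (1 - 1 / p)

theorem ENNReal.rpow_tsum_le_tsum_rpow {ι : Type*} (f : ι → ℝ≥0∞) {ρ : ℝ} (hρ₀ : 0 < ρ)
    (hρ₁ : ρ ≤ 1) : (∑' i, f i) ^ ρ ≤ ∑' i, f i ^ ρ := by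
  rw [ENNReal.tsum_eq_iSup_sum, ← ENNReal.orderIsoRpow_apply ρ hρ₀, OrderIso.map_iSup]
  exact iSup_le fun s => (Finset.le_sum_of_subadditive (· ^ ρ) (by simp [hρ₀])
    (fun x y => ENNReal.rpow_add_le_add_rpow x y hρ₀.le hρ₁) s f).trans (ENNReal.sum_le_tsum s)

theorem ENNReal.two_rpow_add (x y : ℝ) : (2 : ℝ≥0∞) ^ (x + y) = 2 ^ x * 2 ^ y :=
  ENNReal.rpow_add _ _ two_ne_zero ENNReal.ofNat_ne_top

theorem ENNReal.tsum_two_rpow_neg_mul_ne_top {δ : ℝ} (hδ : 0 < δ) :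
    ∑' kj : ℕ × ℕ, (2 : ℝ≥0∞) ^ (-δ * ((kj.1 : ℝ) + kj.2)) ≠ ∞ := by
  have hr : (2 : ℝ≥0∞) ^ (-δ) < 1 :=
    ENNReal.rpow_lt_one_of_one_lt_of_neg (by norm_num) (neg_neg_of_pos hδ)
  have hgeom : ∑' k : ℕ, ((2 : ℝ≥0∞) ^ (-δ)) ^ k ≠ ∞ := by
    rw [ENNReal.tsum_geometric]
    exact ENNReal.inv_ne_top.2 (tsub_pos_of_lt hr).ne'
  have hsplit (kj : ℕ × ℕ) : (2 : ℝ≥0∞) ^ (-δ * ((kj.1 : ℝ) + kj.2)) =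
      ((2 : ℝ≥0∞) ^ (-δ)) ^ kj.1 * ((2 : ℝ≥0∞) ^ (-δ)) ^ kj.2 := by
    rw [mul_add, two_rpow_add, ENNReal.rpow_mul, ENNReal.rpow_mul, ENNReal.rpow_natCast,
      ENNReal.rpow_natCast]
  rw [tsum_congr hsplit, ENNReal.tsum_prod']
  simp only [ENNReal.tsum_mul_left, ENNReal.tsum_mul_right]
  exact ENNReal.mul_ne_top hgeom hgeom

theorem ENNReal.cyclic_le_mul {x y z a b c : ℝ≥0∞} (hxy : x ≤ a * y) (hyz : y ≤ b * z)
    (hzx : z ≤ c * x) :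
    z ≤ (c * a + b * c + a * b) * y ∧ y ≤ (c * a + b * c + a * b) * x ∧
      x ≤ (c * a + b * c + a * b) * z := by
  refine ⟨?_, ?_, ?_⟩
  · calc z ≤ c * (a * y) := hzx.trans (mul_le_mul_right hxy c)
      _ ≤ _ := by rw [← mul_assoc]; exact mul_le_mul_left (le_self_add.trans le_self_add) y
  · calc y ≤ b * (c * x) := hyz.trans (mul_le_mul_right hzx b)
      _ ≤ _ := by rw [← mul_assoc]; exact mul_le_mul_left (le_add_self.trans le_self_add) x
  · calc x ≤ a * (b * z) := hxy.trans (mul_le_mul_right hyz a)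
      _ ≤ _ := by rw [← mul_assoc]; exact mul_le_mul_left le_add_self z

theorem one_sub_one_div_pos {p : ℝ} (hp : 1 < p) : 0 < 1 - 1 / p :=
  sub_pos.2 ((div_lt_one (zero_lt_one.trans hp)).2 hp)

theorem div_sub_one_mul_one_sub_one_div {p : ℝ} (hp : 1 < p) : p / (p - 1) * (1 - 1 / p) = 1 := by
  field_simp [(by linarith : p - 1 ≠ 0)]

section Cube

variable {m : ℕ} {c x : E m} {s : ℝ}

theorem measurableSet_cube (m : ℕ) (c : E m) (s : ℝ) : MeasurableSet (cube m c s) := by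
  simp only [cube, Set.ofPred_forall]
  exact MeasurableSet.iInter fun i => measurableSet_le (by fun_prop) measurable_const

theorem mem_cube_of_norm_sub_le (h : ‖x - c‖ ≤ s / 2) : x ∈ cube m c s :=
  fun i => (PiLp.norm_apply_le (x - c) i).trans h

theorem norm_sub_le_of_mem_cube (hs : 0 ≤ s) (hx : x ∈ cube m c s) :
    ‖x - c‖ ≤ √m * (s / 2) := by
  rw [EuclideanSpace.norm_eq, ← Real.sqrt_sq (by positivity : 0 ≤ s / 2),
    ← Real.sqrt_mul m.cast_nonneg]
  refine Real.sqrt_le_sqrt ?_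
  calc ∑ i, ‖(x - c) i‖ ^ 2 ≤ ∑ _i : Fin m, (s / 2) ^ 2 :=
        Finset.sum_le_sum fun i _ => pow_le_pow_left₀ (norm_nonneg _) (hx i) 2
    _ = m * (s / 2) ^ 2 := by simp

end Cube

section Tail

variable {m : ℕ} {α : ℝ} {c x : E m} {s : ℝ}

theorem one_le_mul_tail_of_mem_cube (hs : 0 < s) (hα : α ≤ m) (hx : x ∈ cube m c s) :
    1 ≤ ENNReal.ofReal ((1 + √m / 2) ^ (m - α)) * tail m α c s x := by
  have hu : 1 + ‖x - c‖ / s ≤ 1 + √m / 2 := by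
    have := norm_sub_le_of_mem_cube hs.le hx
    rw [add_le_add_iff_left, div_le_iff₀ hs]
    linarith
  rw [tail, ← ENNReal.ofReal_mul (by positivity), ← ENNReal.ofReal_one,
    show α - m = -(m - α) by ring, Real.rpow_neg (by positivity), ← div_eq_mul_inv]
  exact ENNReal.ofReal_le_ofReal <| (one_le_div (by positivity)).2 <|
    Real.rpow_le_rpow (by positivity) hu (sub_nonneg.2 hα)

theorem exists_mem_cube_tail_le (hs : 0 < s) (hα : α ≤ m) (x : E m) :
    ∃ k : ℕ, x ∈ cube m c (2 ^ (k + 2) * s) ∧ tail m α c s x ≤ 2 ^ ((k : ℝ) * (α - m)) := by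
  obtain ⟨k, hk_le, hk_lt⟩ :=
    exists_nat_pow_near (le_add_of_nonneg_right (by positivity : 0 ≤ ‖x - c‖ / s)) one_lt_two
  refine ⟨k, mem_cube_of_norm_sub_le ?_, ?_⟩
  · have : ‖x - c‖ / s < 2 ^ (k + 1) := by linarith
    rw [div_lt_iff₀ hs] at this
    linarith [show (2 : ℝ) ^ (k + 2) * s / 2 = 2 ^ (k + 1) * s by ring]
  · calc tail m α c s x ≤ ENNReal.ofReal ((2 ^ k) ^ (α - m)) :=
          ENNReal.ofReal_le_ofReal <|
            Real.rpow_le_rpow_of_nonpos (by positivity) hk_le (sub_nonpos.2 hα)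
      _ = 2 ^ ((k : ℝ) * (α - m)) := by
          rw [← Real.rpow_natCast_mul zero_le_two, ← ENNReal.ofReal_rpow_of_pos two_pos,
            ENNReal.ofReal_ofNat]

end Tail

def tailConst (m n : ℕ) (α β : ℝ) : ℝ≥0∞ :=
  ENNReal.ofReal ((1 + √m / 2) ^ (m - α)) * ENNReal.ofReal ((1 + √n / 2) ^ (n - β))

theorem tailConst_ne_top (m n : ℕ) (α β : ℝ) : tailConst m n α β ≠ ∞ :=
  ENNReal.mul_ne_top ENNReal.ofReal_ne_top ENNReal.ofReal_ne_top

def tailDecay (m n : ℕ) (α β : ℝ) (kj : ℕ × ℕ) : ℝ :=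
  kj.1 * (α - m) + kj.2 * (β - n)

def dyadicRect (m n : ℕ) (c : E m) (d : E n) (s t : ℝ) (kj : ℕ × ℕ) : Set (E m × E n) :=
  cube m c (2 ^ (kj.1 + 2) * s) ×ˢ cube n d (2 ^ (kj.2 + 2) * t)

def revDoublingDecay (m n : ℕ) (ε : ℝ) (kj KJ : ℕ × ℕ) : ℝ :=
  ((kj.1 : ℝ) - KJ.1) * (m * ε) + ((kj.2 : ℝ) - KJ.2) * (n * ε)

section Rect

variable {m n : ℕ} {α β : ℝ} {s t r ι : ℝ}

theorem measure_rect_rpow_le (c : E m) (d : E n) (hs : 0 < s) (ht : 0 < t) (hα : α ≤ m) (hβ : β ≤ n)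
    (hι : 0 < ι) (hrι : r * ι = 1) (μ : Measure (E m × E n)) :
    μ (cube m c s ×ˢ cube n d t) ^ ι ≤
      tailConst m n α β * (∫⁻ z, (tail m α c s z.1 * tail n β d t z.2) ^ r ∂μ) ^ ι := by
  have hr : 0 < r := pos_of_mul_pos_left (hrι ▸ one_pos) hι.le
  have hmeas : MeasurableSet (cube m c s ×ˢ cube n d t) :=
    (measurableSet_cube m c s).prod (measurableSet_cube n d t)
  have hμ : μ (cube m c s ×ˢ cube n d t) ≤
      ∫⁻ z, (tailConst m n α β * (tail m α c s z.1 * tail n β d t z.2)) ^ r ∂μ := by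
    rw [← lintegral_indicator_one hmeas]
    refine lintegral_mono fun z => ?_
    by_cases hz : z ∈ cube m c s ×ˢ cube n d t
    · rw [Set.indicator_of_mem hz, Pi.one_apply, tailConst, mul_mul_mul_comm]
      refine ENNReal.one_le_rpow ?_ hr
      exact one_le_mul (one_le_mul_tail_of_mem_cube hs hα hz.1)
        (one_le_mul_tail_of_mem_cube ht hβ hz.2)
    · simp [hz]
  calc μ (cube m c s ×ˢ cube n d t) ^ ι
      ≤ (∫⁻ z, (tailConst m n α β * (tail m α c s z.1 * tail n β d t z.2)) ^ r ∂μ) ^ ι :=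
        ENNReal.rpow_le_rpow hμ hι.le
    _ = tailConst m n α β * (∫⁻ z, (tail m α c s z.1 * tail n β d t z.2) ^ r ∂μ) ^ ι := by
        have hconst (x : ℝ≥0∞) : (tailConst m n α β * x) ^ r = tailConst m n α β ^ r * x ^ r :=
          ENNReal.mul_rpow_of_nonneg _ _ hr.le
        simp only [hconst]
        rw [lintegral_const_mul' _ _
            (ENNReal.rpow_ne_top_of_nonneg hr.le (tailConst_ne_top m n α β)),
          ENNReal.mul_rpow_of_nonneg _ _ hι.le, ← ENNReal.rpow_mul, hrι, ENNReal.rpow_one]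

theorem rpow_lintegral_tail_le_tsum (c : E m) (d : E n) (hs : 0 < s) (ht : 0 < t)
    (hα : α ≤ m) (hβ : β ≤ n) (hι₀ : 0 < ι) (hι₁ : ι ≤ 1) (hrι : r * ι = 1)
    (μ : Measure (E m × E n)) :
    (∫⁻ z, (tail m α c s z.1 * tail n β d t z.2) ^ r ∂μ) ^ ι ≤
      ∑' kj : ℕ × ℕ, 2 ^ tailDecay m n α β kj * μ (dyadicRect m n c d s t kj) ^ ι := by
  have hr : 0 ≤ r := (pos_of_mul_pos_left (hrι ▸ one_pos) hι₀.le).le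
  set w : ℕ × ℕ → ℝ≥0∞ := fun kj => 2 ^ tailDecay m n α β kj
  have hmeas (kj : ℕ × ℕ) : MeasurableSet (dyadicRect m n c d s t kj) :=
    (measurableSet_cube _ _ _).prod (measurableSet_cube _ _ _)
  have hpt (z : E m × E n) : (tail m α c s z.1 * tail n β d t z.2) ^ r ≤
      ∑' kj, (dyadicRect m n c d s t kj).indicator (fun _ => w kj ^ r) z := by
    obtain ⟨k, hk_mem, hk⟩ := exists_mem_cube_tail_le (c := c) hs hα z.1
    obtain ⟨j, hj_mem, hj⟩ := exists_mem_cube_tail_le (c := d) ht hβ z.2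
    refine le_trans ?_ (ENNReal.le_tsum (k, j))
    rw [Set.indicator_of_mem (show z ∈ dyadicRect m n c d s t (k, j) from ⟨hk_mem, hj_mem⟩)]
    dsimp only [w]
    rw [tailDecay, two_rpow_add]
    exact ENNReal.rpow_le_rpow (mul_le_mul' hk hj) hr
  calc (∫⁻ z, (tail m α c s z.1 * tail n β d t z.2) ^ r ∂μ) ^ ι
      ≤ (∑' kj, w kj ^ r * μ (dyadicRect m n c d s t kj)) ^ ι := by
        refine ENNReal.rpow_le_rpow ?_ hι₀.le
        refine (lintegral_mono hpt).trans_eq ?_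
        rw [lintegral_tsum fun kj => (measurable_const.indicator (hmeas kj)).aemeasurable]
        exact tsum_congr fun kj => lintegral_indicator_const (hmeas kj) _
    _ ≤ ∑' kj, (w kj ^ r * μ (dyadicRect m n c d s t kj)) ^ ι :=
        ENNReal.rpow_tsum_le_tsum_rpow _ hι₀ hι₁
    _ = ∑' kj, w kj * μ (dyadicRect m n c d s t kj) ^ ι := by
        refine tsum_congr fun kj => ?_
        rw [ENNReal.mul_rpow_of_nonneg _ _ hι₀.le, ← ENNReal.rpow_mul, hrι, ENNReal.rpow_one]

end Rect

section RectSupremum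

variable {m n : ℕ} {F : E m → E n → ℝ → ℝ → ℝ≥0∞}

theorem le_iSup_rect (c : E m) (d : E n) {s t : ℝ} (hs : 0 < s) (ht : 0 < t) :
    F c d s t ≤ ⨆ (c : E m) (d : E n) (s : ℝ) (t : ℝ) (_ : 0 < s) (_ : 0 < t), F c d s t :=
  le_iSup_of_le c <| le_iSup_of_le d <| le_iSup_of_le s <| le_iSup_of_le t <|
    le_iSup₂_of_le (f := fun _ _ => F c d s t) hs ht le_rfl

theorem iSup_rect_le {B : ℝ≥0∞} (h : ∀ c d s t, 0 < s → 0 < t → F c d s t ≤ B) :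
    ⨆ (c : E m) (d : E n) (s : ℝ) (t : ℝ) (_ : 0 < s) (_ : 0 < t), F c d s t ≤ B :=
  iSup_le fun c => iSup_le fun d => iSup_le fun s => iSup_le fun t => iSup₂_le (h c d s t)

end RectSupremum

section TailDomination

variable {m n : ℕ} {α β p q : ℝ} {σ ω : Measure (E m × E n)}

theorem Ant_le_tailConst_mul_Aot (hα : α ≤ m) (hβ : β ≤ n) (hq : 0 < q) :
    Ant m n α β p q σ ω ≤ tailConst m n α β * Aot m n α β p q σ ω := by
  refine iSup_rect_le fun c d s t hs ht =>
    le_trans ?_ (mul_le_mul_right ((le_iSup_rect c d hs ht).trans le_self_add) _)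
  have hω := measure_rect_rpow_le c d hs ht hα hβ (by positivity) (mul_one_div_cancel hq.ne') ω
  calc _ ≤ _ := mul_le_mul_left (mul_le_mul_right hω _) _
    _ = _ := by ring

theorem Aot_le_two_mul_tailConst_mul_Aht (hα : α ≤ m) (hβ : β ≤ n) (hp : 1 < p) (hq : 0 < q) :
    Aot m n α β p q σ ω ≤ 2 * tailConst m n α β * Aht m n α β p q σ ω := by
  have hp' := one_sub_one_div_pos hp
  rw [Aot, two_mul, add_mul]
  gcongr <;> refine iSup_rect_le fun c d s t hs ht =>
    le_trans ?_ (mul_le_mul_right (le_iSup_rect c d hs ht) _)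
  · have hσ := measure_rect_rpow_le c d hs ht hα hβ hp' (div_sub_one_mul_one_sub_one_div hp) σ
    calc _ ≤ _ := mul_le_mul_right hσ _
      _ = _ := by ring
  · have hω := measure_rect_rpow_le c d hs ht hα hβ (by positivity) (mul_one_div_cancel hq.ne') ω
    calc _ ≤ _ := mul_le_mul_left (mul_le_mul_right hω _) _
      _ = _ := by ring

end TailDomination

section Dyadic

variable {m n : ℕ} {α β p q ε C₀ δ : ℝ} {σ ω : Measure (E m × E n)} {s t : ℝ}

theorem RectRevDoub.rpow_measure_dyadicRect_le {μ : Measure (E m × E n)}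
    (hμ : RectRevDoub m n ε C₀ μ) (c : E m) (d : E n) (hs : 0 < s) (ht : 0 < t)
    {kj KJ : ℕ × ℕ} (h : kj ≤ KJ) {ρ : ℝ} (hρ : 0 ≤ ρ) :
    μ (dyadicRect m n c d s t kj) ^ ρ ≤ ENNReal.ofReal C₀ ^ ρ *
      2 ^ (revDoublingDecay m n ε kj KJ * ρ) * μ (dyadicRect m n c d s t KJ) ^ ρ := by
  have hratio (i I : ℕ) {u : ℝ} (hu : 0 < u) :
      2 ^ (i + 2) * u / (2 ^ (I + 2) * u) = (2 : ℝ) ^ ((i : ℝ) - I) := by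
    rw [mul_div_mul_right _ _ hu.ne', ← Real.rpow_natCast, ← Real.rpow_natCast,
      ← Real.rpow_sub two_pos]
    push_cast
    ring_nf
  have hle : μ (dyadicRect m n c d s t kj) ≤ ENNReal.ofReal C₀ *
      2 ^ revDoublingDecay m n ε kj KJ * μ (dyadicRect m n c d s t KJ) := by
    refine (hμ c d (2 ^ (KJ.1 + 2) * s) (2 ^ (KJ.2 + 2) * t) _ _ (by positivity) ?_
      (by positivity) ?_).trans_eq ?_
    · exact mul_le_mul_of_nonneg_right
        (pow_le_pow_right₀ one_le_two (Nat.add_le_add_right h.1 2)) hs.le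
    · exact mul_le_mul_of_nonneg_right
        (pow_le_pow_right₀ one_le_two (Nat.add_le_add_right h.2 2)) ht.le
    rw [hratio _ _ hs, hratio _ _ ht, ← Real.rpow_mul zero_le_two, ← Real.rpow_mul zero_le_two,
      mul_assoc, ENNReal.ofReal_mul' (by positivity), ← Real.rpow_add two_pos,
      ← ENNReal.ofReal_rpow_of_pos two_pos, ENNReal.ofReal_ofNat]
    rfl
  calc _ ≤ (ENNReal.ofReal C₀ * 2 ^ revDoublingDecay m n ε kj KJ *
        μ (dyadicRect m n c d s t KJ)) ^ ρ := ENNReal.rpow_le_rpow hle hρ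
    _ = _ := by rw [ENNReal.mul_rpow_of_nonneg _ _ hρ, ENNReal.mul_rpow_of_nonneg _ _ hρ,
        ← ENNReal.rpow_mul]

theorem two_rpow_tailDecay_mul_le_Ant (c : E m) (d : E n) (hs : 0 < s) (ht : 0 < t)
    (KJ : ℕ × ℕ) :
    2 ^ tailDecay m n α β KJ * (ENNReal.ofReal (s ^ (α - m) * t ^ (β - n)) *
        ω (dyadicRect m n c d s t KJ) ^ (1 / q) * σ (dyadicRect m n c d s t KJ) ^ (1 - 1 / p)) ≤
      2 ^ (2 * (m - α) + 2 * (n - β)) * Ant m n α β p q σ ω := by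
  have hscale : ENNReal.ofReal ((2 ^ (KJ.1 + 2) * s) ^ (α - m) * (2 ^ (KJ.2 + 2) * t) ^ (β - n)) =
      2 ^ (tailDecay m n α β KJ + (2 * (α - m) + 2 * (β - n))) *
        ENNReal.ofReal (s ^ (α - m) * t ^ (β - n)) := by
    rw [Real.mul_rpow (by positivity) hs.le, Real.mul_rpow (by positivity) ht.le,
      ← Real.rpow_natCast_mul zero_le_two, ← Real.rpow_natCast_mul zero_le_two,
      mul_mul_mul_comm, ENNReal.ofReal_mul (by positivity), ← Real.rpow_add two_pos,
      ← ENNReal.ofReal_rpow_of_pos two_pos, ENNReal.ofReal_ofNat, tailDecay]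
    congr 2
    push_cast
    ring
  have hcancel : (2 : ℝ≥0∞) ^ tailDecay m n α β KJ = 2 ^ (2 * (m - α) + 2 * (n - β)) *
      2 ^ (tailDecay m n α β KJ + (2 * (α - m) + 2 * (β - n))) := by
    rw [← two_rpow_add]
    ring_nf
  calc _ = 2 ^ (2 * (m - α) + 2 * (n - β)) *
        (ENNReal.ofReal ((2 ^ (KJ.1 + 2) * s) ^ (α - m) * (2 ^ (KJ.2 + 2) * t) ^ (β - n)) *
          ω (dyadicRect m n c d s t KJ) ^ (1 / q) *
            σ (dyadicRect m n c d s t KJ) ^ (1 - 1 / p)) := by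
        rw [hcancel, hscale]
        ring
    _ ≤ _ := mul_le_mul_right (le_iSup_rect c d (by positivity) (by positivity)) _

theorem dyadic_exponent_le {a b b' δ x y : ℝ} (hx : 0 ≤ x) (hy : 0 ≤ y) (hδ : 0 ≤ δ)
    (ha : δ ≤ a) (hb : δ ≤ b) (hb' : δ ≤ b') :
    -(x * a) - y * a + (x - max x y) * b + (y - max x y) * b' ≤
      -(max x y * a) - δ / 2 * (x + y) := by
  rcases le_total x y with h | h
  · rw [max_eq_right h]
    nlinarith [mul_nonneg (sub_nonneg.2 h) (sub_nonneg.2 hb), mul_nonneg hx (sub_nonneg.2 ha),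
      mul_nonneg hδ (sub_nonneg.2 h)]
  · rw [max_eq_left h]
    nlinarith [mul_nonneg (sub_nonneg.2 h) (sub_nonneg.2 hb'), mul_nonneg hy (sub_nonneg.2 ha),
      mul_nonneg hδ (sub_nonneg.2 h)]

theorem tailDecay_add_revDoublingDecay_le {ρ ρ' : ℝ} (hm : 0 < m) (hn : 0 < n) (hρ : 0 ≤ ρ)
    (hρ' : 0 ≤ ρ') (hε : 0 ≤ ε) (hδ : 0 ≤ δ) (hδα : δ ≤ m - α) (hδβ : δ ≤ n - β)
    (hδε : δ ≤ ε * min ρ ρ') (kj k'j' : ℕ × ℕ) :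
    tailDecay m n α β kj + revDoublingDecay m n ε kj (kj ⊔ k'j') * ρ +
        (tailDecay m n α β k'j' + revDoublingDecay m n ε k'j' (kj ⊔ k'j') * ρ') ≤
      tailDecay m n α β (kj ⊔ k'j') +
        (-(δ / 2) * ((kj.1 : ℝ) + kj.2) + -(δ / 2) * ((k'j'.1 : ℝ) + k'j'.2)) := by
  have hερ : δ ≤ ε * ρ := hδε.trans (mul_le_mul_of_nonneg_left (min_le_left _ _) hε)
  have hερ' : δ ≤ ε * ρ' := hδε.trans (mul_le_mul_of_nonneg_left (min_le_right _ _) hε)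
  have hscale {k : ℕ} (hk : 0 < k) {x : ℝ} (hx : 0 ≤ x) : ε * x ≤ k * ε * x := by
    nlinarith [mul_nonneg hε hx, (Nat.one_le_cast (α := ℝ)).2 hk]
  have hK : ((kj ⊔ k'j').1 : ℝ) = max (kj.1 : ℝ) k'j'.1 := by simp
  have hJ : ((kj ⊔ k'j').2 : ℝ) = max (kj.2 : ℝ) k'j'.2 := by simp
  simp only [tailDecay, revDoublingDecay, hK, hJ]
  linarith [dyadic_exponent_le kj.1.cast_nonneg k'j'.1.cast_nonneg hδ hδα
      (hερ.trans (hscale hm hρ)) (hερ'.trans (hscale hm hρ')),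
    dyadic_exponent_le kj.2.cast_nonneg k'j'.2.cast_nonneg hδ hδβ
      (hερ.trans (hscale hn hρ)) (hερ'.trans (hscale hn hρ'))]

theorem dyadic_term_le_Ant (hσ : RectRevDoub m n ε C₀ σ) (hω : RectRevDoub m n ε C₀ ω)
    (c : E m) (d : E n) (hs : 0 < s) (ht : 0 < t) (hm : 0 < m) (hn : 0 < n) (hp : 1 < p)
    (hq : 0 < q) (hε : 0 ≤ ε) (hδ : 0 ≤ δ) (hδα : δ ≤ m - α) (hδβ : δ ≤ n - β)
    (hδε : δ ≤ ε * min (1 / q) (1 - 1 / p)) (kj k'j' : ℕ × ℕ) :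
    ENNReal.ofReal (s ^ (α - m) * t ^ (β - n)) *
        (2 ^ tailDecay m n α β kj * ω (dyadicRect m n c d s t kj) ^ (1 / q)) *
        (2 ^ tailDecay m n α β k'j' * σ (dyadicRect m n c d s t k'j') ^ (1 - 1 / p)) ≤
      ENNReal.ofReal C₀ ^ (1 / q) * ENNReal.ofReal C₀ ^ (1 - 1 / p) *
        2 ^ (2 * (m - α) + 2 * (n - β)) *
        (2 ^ (-(δ / 2) * ((kj.1 : ℝ) + kj.2)) * 2 ^ (-(δ / 2) * ((k'j'.1 : ℝ) + k'j'.2))) *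
        Ant m n α β p q σ ω := by
  have hρ' := (one_sub_one_div_pos hp).le
  have hexp :=
    tailDecay_add_revDoublingDecay_le hm hn (by positivity) hρ' hε hδ hδα hδβ hδε kj k'j'
  set KJ := kj ⊔ k'j'
  set S := ENNReal.ofReal (s ^ (α - m) * t ^ (β - n))
  set X := ω (dyadicRect m n c d s t KJ) ^ (1 / q)
  set Y := σ (dyadicRect m n c d s t KJ) ^ (1 - 1 / p)
  set C := ENNReal.ofReal C₀ ^ (1 / q) * ENNReal.ofReal C₀ ^ (1 - 1 / p)
  set w := (2 : ℝ≥0∞) ^ (-(δ / 2) * ((kj.1 : ℝ) + kj.2))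
  set w' := (2 : ℝ≥0∞) ^ (-(δ / 2) * ((k'j'.1 : ℝ) + k'j'.2))
  calc _ ≤ S * (2 ^ tailDecay m n α β kj * (ENNReal.ofReal C₀ ^ (1 / q) *
          2 ^ (revDoublingDecay m n ε kj KJ * (1 / q)) * X)) *
        (2 ^ tailDecay m n α β k'j' * (ENNReal.ofReal C₀ ^ (1 - 1 / p) *
          2 ^ (revDoublingDecay m n ε k'j' KJ * (1 - 1 / p)) * Y)) := by
        gcongr
        exacts [hω.rpow_measure_dyadicRect_le c d hs ht le_sup_left (by positivity),
          hσ.rpow_measure_dyadicRect_le c d hs ht le_sup_right hρ']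
    _ = C * 2 ^ (tailDecay m n α β kj + revDoublingDecay m n ε kj KJ * (1 / q) +
          (tailDecay m n α β k'j' + revDoublingDecay m n ε k'j' KJ * (1 - 1 / p))) *
        (S * X * Y) := by
        simp only [two_rpow_add]
        ring
    _ ≤ C * 2 ^ (tailDecay m n α β KJ + (-(δ / 2) * ((kj.1 : ℝ) + kj.2) +
          -(δ / 2) * ((k'j'.1 : ℝ) + k'j'.2))) * (S * X * Y) :=
        mul_le_mul_left (mul_le_mul_right
          (ENNReal.rpow_le_rpow_of_exponent_le one_le_two hexp) _) _
    _ = C * (w * w') * (2 ^ tailDecay m n α β KJ * (S * X * Y)) := by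
        rw [two_rpow_add, two_rpow_add]
        ring
    _ ≤ C * (w * w') * (2 ^ (2 * (m - α) + 2 * (n - β)) * Ant m n α β p q σ ω) :=
        mul_le_mul_right (two_rpow_tailDecay_mul_le_Ant c d hs ht KJ) _
    _ = _ := by ring

theorem Aht_le_mul_Ant (hσ : RectRevDoub m n ε C₀ σ) (hω : RectRevDoub m n ε C₀ ω)
    (hm : 0 < m) (hn : 0 < n) (hp : 1 < p) (hq : 1 ≤ q) (hε : 0 ≤ ε) (hδ : 0 ≤ δ)
    (hδα : δ ≤ m - α) (hδβ : δ ≤ n - β) (hδε : δ ≤ ε * min (1 / q) (1 - 1 / p)) :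
    Aht m n α β p q σ ω ≤
      ENNReal.ofReal C₀ ^ (1 / q) * ENNReal.ofReal C₀ ^ (1 - 1 / p) *
        2 ^ (2 * (m - α) + 2 * (n - β)) *
        (∑' kj : ℕ × ℕ, (2 : ℝ≥0∞) ^ (-(δ / 2) * ((kj.1 : ℝ) + kj.2))) ^ 2 *
        Ant m n α β p q σ ω := by
  have hα : α ≤ m := by linarith
  have hβ : β ≤ n := by linarith
  have hq₀ : 0 < q := by linarith
  have hρ' := one_sub_one_div_pos hp
  set M := ENNReal.ofReal C₀ ^ (1 / q) * ENNReal.ofReal C₀ ^ (1 - 1 / p) *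
    2 ^ (2 * (m - α) + 2 * (n - β))
  set w : ℕ × ℕ → ℝ≥0∞ := fun kj => 2 ^ (-(δ / 2) * ((kj.1 : ℝ) + kj.2))
  set A := Ant m n α β p q σ ω
  refine iSup_rect_le fun c d s t hs ht => ?_
  have hIω := rpow_lintegral_tail_le_tsum c d hs ht hα hβ (by positivity)
    ((div_le_one hq₀).2 hq) (mul_one_div_cancel hq₀.ne') ω
  have hIσ := rpow_lintegral_tail_le_tsum c d hs ht hα hβ hρ'
    (sub_le_self 1 (by positivity)) (div_sub_one_mul_one_sub_one_div hp) σ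
  have hsplit (kj k'j' : ℕ × ℕ) : M * (w kj * w k'j') * A = w kj * (M * A) * w k'j' := by ring
  calc _ ≤ ENNReal.ofReal (s ^ (α - m) * t ^ (β - n)) *
        (∑' kj, 2 ^ tailDecay m n α β kj * ω (dyadicRect m n c d s t kj) ^ (1 / q)) *
        (∑' k'j', 2 ^ tailDecay m n α β k'j' * σ (dyadicRect m n c d s t k'j') ^ (1 - 1 / p)) := by
        gcongr
    _ = ∑' kj, ∑' k'j', ENNReal.ofReal (s ^ (α - m) * t ^ (β - n)) *
        (2 ^ tailDecay m n α β kj * ω (dyadicRect m n c d s t kj) ^ (1 / q)) *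
        (2 ^ tailDecay m n α β k'j' * σ (dyadicRect m n c d s t k'j') ^ (1 - 1 / p)) := by
        simp only [ENNReal.tsum_mul_left, ENNReal.tsum_mul_right]
    _ ≤ ∑' kj, ∑' k'j', M * (w kj * w k'j') * A :=
        ENNReal.tsum_le_tsum fun kj => ENNReal.tsum_le_tsum fun k'j' =>
          dyadic_term_le_Ant hσ hω c d hs ht hm hn hp hq₀ hε hδ hδα hδβ hδε kj k'j'
    _ = M * (∑' kj, w kj) ^ 2 * A := by
        simp only [hsplit, ENNReal.tsum_mul_left, ENNReal.tsum_mul_right]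
        ring

theorem exists_Aht_le_mul_Ant (hm : 0 < m) (hn : 0 < n) (hα : α < m) (hβ : β < n) (hp : 1 < p)
    (hq : 1 ≤ q) (hε : 0 < ε) :
    ∃ K : ℝ≥0∞, K ≠ ∞ ∧ ∀ σ ω : Measure (E m × E n),
      RectRevDoub m n ε C₀ σ → RectRevDoub m n ε C₀ ω →
        Aht m n α β p q σ ω ≤ K * Ant m n α β p q σ ω := by
  have hρ' := one_sub_one_div_pos hp
  set δ := min (min ((m : ℝ) - α) (n - β)) (ε * min (1 / q) (1 - 1 / p))
  have hδ : 0 < δ :=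
    lt_min (lt_min (by linarith) (by linarith)) (mul_pos hε (lt_min (by positivity) hρ'))
  refine ⟨_, ?_, fun σ ω hσ hω => Aht_le_mul_Ant hσ hω hm hn hp hq hε.le hδ.le
    ((min_le_left _ _).trans (min_le_left _ _)) ((min_le_left _ _).trans (min_le_right _ _))
    (min_le_right _ _)⟩
  have hsum := ENNReal.tsum_two_rpow_neg_mul_ne_top (half_pos hδ)
  simp only [neg_mul] at hsum ⊢
  refine ENNReal.mul_ne_top (ENNReal.mul_ne_top (ENNReal.mul_ne_top ?_ ?_) ?_)
    (ENNReal.pow_ne_top hsum)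
  · exact ENNReal.rpow_ne_top_of_nonneg (by positivity) ENNReal.ofReal_ne_top
  · exact ENNReal.rpow_ne_top_of_nonneg hρ'.le ENNReal.ofReal_ne_top
  · exact ENNReal.rpow_ne_top_of_ne_zero two_ne_zero ENNReal.ofNat_ne_top

end Dyadic

theorem characteristics_equivalent_revDoubling_general (m n : ℕ) (hm : 0 < m) (hn : 0 < n)
    (α β p q ε C₀ : ℝ) (hαm : α < m) (hβn : β < n)
    (hp : 1 < p) (hq : 1 < q) (hε : 0 < ε) :
    ∃ C : ℝ≥0∞, C ≠ ∞ ∧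
      ∀ σ ω : Measure (E m × E n),
        RectRevDoub m n ε C₀ σ → RectRevDoub m n ε C₀ ω →
        Aht m n α β p q σ ω ≤ C * Aot m n α β p q σ ω ∧
          Aot m n α β p q σ ω ≤ C * Ant m n α β p q σ ω ∧
          Ant m n α β p q σ ω ≤ C * Aht m n α β p q σ ω := by
  obtain ⟨K, hK, hAht⟩ := exists_Aht_le_mul_Ant (C₀ := C₀) hm hn hαm hβn hp hq.le hε
  have hκ := tailConst_ne_top m n α β
  refine ⟨K * tailConst m n α β + 2 * tailConst m n α β * K +
    tailConst m n α β * (2 * tailConst m n α β), by finiteness, fun σ ω hσ hω => ?_⟩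
  exact ENNReal.cyclic_le_mul (Ant_le_tailConst_mul_Aot hαm.le hβn.le (by linarith))
    (Aot_le_two_mul_tailConst_mul_Aht hαm.le hβn.le hp (by linarith)) (hAht σ ω hσ hω)

/-- **Equivalence of the no-tail, one-tail and two-tail characteristics under rectangle
reverse doubling.**  If `σ` and `ω` are rectangle reverse doubling with constant `C₀` and
exponent `ε > 0`, and `0 < α < m`, `0 < β < n`, `1 < p, q < ∞`, then
`Â ≈ Ā ≈ A` with constants depending only on `m, n, α, β, p, q, ε, C₀`. -/
theorem characteristics_equivalent_revDoubling (m n : ℕ) (hm : 0 < m) (hn : 0 < n)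
    (α β p q ε C₀ : ℝ) (hα : 0 < α) (hαm : α < m) (hβ : 0 < β) (hβn : β < n)
    (hp : 1 < p) (hq : 1 < q) (hε : 0 < ε) (hC₀ : 0 < C₀) :
    ∃ C : ℝ≥0∞, C ≠ ∞ ∧
      ∀ σ ω : Measure (E m × E n),
        RectRevDoub m n ε C₀ σ → RectRevDoub m n ε C₀ ω →
        Aht m n α β p q σ ω ≤ C * Aot m n α β p q σ ω ∧
          Aot m n α β p q σ ω ≤ C * Ant m n α β p q σ ω ∧
          Ant m n α β p q σ ω ≤ C * Aht m n α β p q σ ω :=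
  characteristics_equivalent_revDoubling_general m n hm hn α β p q ε C₀ hαm hβn hp hq hε
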